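/- Let φ be a smooth rapidly decreasing function on ℝ. Then for all real μ, μ', |(φ(μ-μ') - φ(μ))/μ' · (μ'+i)| ≤ C[(1+|μ|)^{-4} + (1+|μ-μ'|)^{-4}], where the left-hand side is interpreted via the divided difference when μ' = 0 and C depends only on finitely many Schwartz seminorms of φ. -/

import Mathlib

/-! For |μ'| ≤ 1 the mean value theorem bounds the difference quotient by the derivative on
the unit ball around μ, where the weight (1 + |ξ|)⁻⁴ is comparable to (1 + |μ|)⁻⁴; for |μ'| ≥ 1 the
factor (μ' + i)/μ' is bounded by 2 and the decay of φ at μ and μ - μ' suffices. -/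

open SchwartzMap Complex

theorem SchwartzMap.exists_norm_le_mul_inv_one_add_norm_pow {E F : Type*}
    [NormedAddCommGroup E] [NormedSpace ℝ E] [NormedAddCommGroup F] [NormedSpace ℝ F]
    (f : 𝓢(E, F)) (k : ℕ) :
    ∃ C, 0 ≤ C ∧ ∀ x, ‖f x‖ ≤ C * ((1 + ‖x‖) ^ k)⁻¹ := by
  refine ⟨2 ^ k * (Finset.Iic (k, 0)).sup (fun m => SchwartzMap.seminorm ℝ m.1 m.2) f,
    by positivity, fun x => ?_⟩
  have h := one_add_le_sup_seminorm_apply (𝕜 := ℝ) (m := (k, 0)) le_rfl le_rfl f x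
  rw [norm_iteratedFDeriv_zero] at h
  rwa [← div_eq_mul_inv, le_div_iff₀' (by positivity)]

theorem inv_one_add_norm_pow_le_of_norm_sub_le_one {E : Type*} [SeminormedAddCommGroup E]
    {x y : E} (hxy : ‖x - y‖ ≤ 1) (k : ℕ) :
    ((1 + ‖x‖) ^ k)⁻¹ ≤ 2 ^ k * ((1 + ‖y‖) ^ k)⁻¹ := by
  have hy : 1 + ‖y‖ ≤ 2 * (1 + ‖x‖) := by
    linarith [norm_le_norm_add_norm_sub' y x, norm_sub_rev x y, norm_nonneg x]
  calc ((1 + ‖x‖) ^ k)⁻¹ = 2 ^ k * ((2 * (1 + ‖x‖)) ^ k)⁻¹ := by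
        rw [mul_pow, mul_inv, ← mul_assoc, mul_inv_cancel₀ (by positivity), one_mul]
    _ ≤ 2 ^ k * ((1 + ‖y‖) ^ k)⁻¹ := by gcongr

theorem norm_sub_le_of_norm_deriv_le_mul_inv_one_add_abs_pow {F : Type*}
    [NormedAddCommGroup F] [NormedSpace ℝ F] {f : ℝ → F} (hf : Differentiable ℝ f)
    {C : ℝ} (hC : 0 ≤ C) {k : ℕ} (hf' : ∀ x, ‖deriv f x‖ ≤ C * ((1 + |x|) ^ k)⁻¹)
    {x h : ℝ} (hh : |h| ≤ 1) :
    ‖f (x - h) - f x‖ ≤ 2 ^ k * C * ((1 + |x|) ^ k)⁻¹ * |h| := by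
  have hderiv : ∀ ξ ∈ Metric.closedBall x 1, ‖deriv f ξ‖ ≤ 2 ^ k * C * ((1 + |x|) ^ k)⁻¹ := by
    intro ξ hξ
    have hdecay := inv_one_add_norm_pow_le_of_norm_sub_le_one (mem_closedBall_iff_norm.mp hξ) k
    simp only [Real.norm_eq_abs] at hdecay
    calc ‖deriv f ξ‖ ≤ C * ((1 + |ξ|) ^ k)⁻¹ := hf' ξ
      _ ≤ C * (2 ^ k * ((1 + |x|) ^ k)⁻¹) := by gcongr
      _ = 2 ^ k * C * ((1 + |x|) ^ k)⁻¹ := by ring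
  have hmvt := (convex_closedBall x 1).norm_image_sub_le_of_norm_deriv_le
    (fun ξ _ => hf ξ) hderiv (Metric.mem_closedBall_self zero_le_one)
    (show x - h ∈ Metric.closedBall x 1 by simpa [Real.dist_eq] using hh)
  simpa [Real.norm_eq_abs, abs_sub_comm] using hmvt

theorem Complex.norm_ofReal_add_I_le (h : ℝ) : ‖(h : ℂ) + I‖ ≤ 1 + |h| := by
  simpa [add_comm] using norm_add_le (h : ℂ) I

theorem Complex.norm_div_mul_ofReal_add_I_le_of_abs_le_one {z : ℂ} {h M : ℝ} (hM : 0 ≤ M)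
    (hz : ‖z‖ ≤ M * |h|) (hh : |h| ≤ 1) : ‖z / h * (h + I)‖ ≤ 2 * M := by
  rw [norm_mul, norm_div, norm_real, Real.norm_eq_abs, mul_comm 2]
  exact mul_le_mul (div_le_of_le_mul₀ (abs_nonneg h) hM hz)
    ((norm_ofReal_add_I_le h).trans (by linarith)) (norm_nonneg _) hM

theorem Complex.norm_div_mul_ofReal_add_I_le_of_one_le_abs (z : ℂ) {h : ℝ} (hh : 1 ≤ |h|) :
    ‖z / h * (h + I)‖ ≤ 2 * ‖z‖ := by
  rw [norm_mul, norm_div, norm_real, Real.norm_eq_abs, div_mul_eq_mul_div,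
    div_le_iff₀ (by linarith)]
  calc ‖z‖ * ‖(h : ℂ) + I‖ ≤ ‖z‖ * (1 + |h|) := by gcongr; exact norm_ofReal_add_I_le h
    _ ≤ 2 * ‖z‖ * |h| := by nlinarith [norm_nonneg z]

theorem divided_difference_bound (φ : SchwartzMap ℝ ℂ) :
    ∃ C : ℝ, 0 < C ∧ ∀ μ μ' : ℝ,
      ‖(if μ' = 0 then -deriv (⇑φ) μ else (φ (μ - μ') - φ μ) / ((μ' : ℝ) : ℂ)) *
          (((μ' : ℝ) : ℂ) + Complex.I)‖ ≤
        C * (((1 + |μ|) ^ 4)⁻¹ + ((1 + |μ - μ'|) ^ 4)⁻¹) := by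
  obtain ⟨C₀, hC₀, hφ⟩ := φ.exists_norm_le_mul_inv_one_add_norm_pow 4
  obtain ⟨C₁, hC₁, hφ'⟩ := (derivCLM ℝ ℂ φ).exists_norm_le_mul_inv_one_add_norm_pow 4
  simp only [Real.norm_eq_abs, derivCLM_apply] at hφ hφ'
  refine ⟨2 * C₀ + 2 ^ 5 * C₁ + 1, by positivity, fun μ μ' => ?_⟩
  have ha : 0 ≤ ((1 + |μ|) ^ 4)⁻¹ := by positivity
  have hb : 0 ≤ ((1 + |μ - μ'|) ^ 4)⁻¹ := by positivity
  rcases eq_or_ne μ' 0 with rfl | hμ'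
  · simp only [if_true, ofReal_zero, zero_add, norm_mul, norm_neg, norm_I, mul_one]
    nlinarith [hφ' μ]
  rw [if_neg hμ']
  rcases le_total |μ'| 1 with hsmall | hlarge
  · have hdiff := norm_sub_le_of_norm_deriv_le_mul_inv_one_add_abs_pow φ.differentiable hC₁
      hφ' (x := μ) hsmall
    grw [norm_div_mul_ofReal_add_I_le_of_abs_le_one (by positivity) hdiff hsmall]
    nlinarith
  · grw [norm_div_mul_ofReal_add_I_le_of_one_le_abs _ hlarge, norm_sub_le, hφ, hφ]
    nlinarith
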